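/- arXiv:1812.05346 — 3 statements merged into one kernel-verified Lean document; each statement's English description precedes it below -/
import Mathlib

section
/- Let M = (a b; c d) be a 2×2 integer matrix with ad − bc = 1, let q, p ∈ ℤ with q ≡ ab (mod 2) and p ≡ cd (mod 2), and let j ∈ ℤ. Let M·W_j = (a+jb b; c+jd d), where W_j = (1 0; j 1) (note that (q − jb, p − jd) satisfies the parity condition for M·W_j). Suppose μ₁ ∈ ℂ satisfies ⟨S_{(q/2,p/2)}𝓜(M)Ш₁, f⟩ = μ₁·∑_{n∈ℤ} f(n) for every Schwartz f, and μ₂ ∈ ℂ satisfies ⟨S_{((q−jb)/2,(p−jd)/2)}𝓜(M·W_j)Ш₁, f⟩ = μ₂·∑_{n∈ℤ} f(n) for every Schwartz f. Then μ₁ = exp((πi/4)·j·(d·q − p·b))·μ₂. -/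
/-!
Both pairings are sums over `n ∈ ℤ` of a metaplectic image evaluated at `n`, and they agree term
by term up to the factor `exp((πi/4) j (dq - pb))`. For `b ≠ 0` the substitution `y ↦ y + jb/2`
matches the two integrands; for `b = 0` the chirp-times-dilation formulas match directly. In both
cases the remaining phase is `exp(πi j (n² - n)) = 1`, since `n² - n` is even. Testing both pairings
against a Schwartz bump that is `1` at `0` and vanishes at the other integers compares `μ₁`
with `μ₂`.
-/

open MeasureTheory

/-- The metaplectic operator `𝓜(M)` associated with a real matrix `M = (a b; c d)` with
`ad - bc = 1`, acting on functions `f : ℝ → ℂ`.  Square roots with positive real part are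
given by the principal complex power. -/
noncomputable def metaplectic (a b c d : ℝ) (f : ℝ → ℂ) (x : ℝ) : ℂ :=
  if b ≠ 0 then
    (Complex.I * (b : ℂ)) ^ (-(1/2) : ℂ) *
      ∫ y : ℝ, Complex.exp ((Real.pi : ℂ) * Complex.I / (b : ℂ) *
        ((d * x ^ 2 - 2 * x * y + a * y ^ 2 : ℝ) : ℂ)) * f y
  else if 0 < a then
    (a : ℂ) ^ (-(1/2) : ℂ) * Complex.exp ((Real.pi : ℂ) * Complex.I * ((c / a : ℝ) : ℂ)
      * ((x : ℂ)) ^ 2) * f (x / a)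
  else
    -Complex.I * ((-a : ℝ) : ℂ) ^ (-(1/2) : ℂ) *
      Complex.exp ((Real.pi : ℂ) * Complex.I * ((c / a : ℝ) : ℂ) * ((x : ℂ)) ^ 2) * f (x / a)

/-- The pairing `⟨S_{(q/2,p/2)} 𝓜(M) Ш₁, f⟩ = ∑_{n ∈ ℤ} (𝓜(M') g)(n)` where
`M' = (d b; c a)` and `g(x) = exp(πiqp/4 + πipx) f(x + q/2)`. -/
noncomputable def shiftMetaPair (a b c d q p : ℝ) (f : ℝ → ℂ) : ℂ :=
  ∑' n : ℤ, metaplectic d b c a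
    (fun x => Complex.exp ((Real.pi : ℂ) * Complex.I * (q : ℂ) * (p : ℂ) / 4
        + (Real.pi : ℂ) * Complex.I * (p : ℂ) * (x : ℂ)) * f (x + q / 2)) (n : ℝ)

open Real Complex

noncomputable def phaseShiftWindow (q p : ℝ) (f : ℝ → ℂ) (x : ℝ) : ℂ :=
  cexp (π * I * q * p / 4 + π * I * p * x) * f (x + q / 2)

theorem shiftMetaPair_eq_tsum (a b c d q p : ℝ) (f : ℝ → ℂ) :
    shiftMetaPair a b c d q p f = ∑' n : ℤ, metaplectic d b c a (phaseShiftWindow q p f) n :=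
  rfl

theorem metaplectic_eq_mul_of_integrand_eq {a b c d c' d' x : ℝ} {f f' : ℝ → ℂ} (hb : b ≠ 0)
    (E : ℂ) (t : ℝ)
    (h : ∀ y : ℝ, cexp (π * I / b * ((d * x ^ 2 - 2 * x * y + a * y ^ 2 : ℝ) : ℂ)) * f y =
      E * (cexp (π * I / b * ((d' * x ^ 2 - 2 * x * (y + t) + a * (y + t) ^ 2 : ℝ) : ℂ)) *
        f' (y + t))) :
    metaplectic a b c d f x = E * metaplectic a b c' d' f' x := by
  simp only [metaplectic, if_pos hb]
  rw [integral_congr_ae (.of_forall h), integral_const_mul, mul_left_comm]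
  congr 2
  exact integral_add_right_eq_self
    (fun y ↦ cexp (π * I / b * ((d' * x ^ 2 - 2 * x * y + a * y ^ 2 : ℝ) : ℂ)) * f' y) t

theorem metaplectic_zero_eq_mul_of_eq {a c d c' d' x : ℝ} {f f' : ℝ → ℂ} (E : ℂ)
    (h : cexp (π * I * ((c / a : ℝ) : ℂ) * (x : ℂ) ^ 2) * f (x / a) =
      E * (cexp (π * I * ((c' / a : ℝ) : ℂ) * (x : ℂ) ^ 2) * f' (x / a))) :
    metaplectic a 0 c d f x = E * metaplectic a 0 c' d' f' x := by
  simp only [metaplectic, ne_eq, not_true_eq_false, if_false]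
  split_ifs
  · linear_combination (a : ℂ) ^ (-(1 / 2) : ℂ) * h
  · linear_combination -I * ((-a : ℝ) : ℂ) ^ (-(1 / 2) : ℂ) * h

theorem cexp_add_pi_mul_I_mul_sq_sub_self (z : ℂ) (j n : ℤ) :
    cexp (z + π * I * j * ((n : ℂ) ^ 2 - n)) = cexp z := by
  obtain ⟨m, hm⟩ := n.even_mul_pred_self
  have hmC : (n : ℂ) * (n - 1) = m + m := by exact_mod_cast hm
  have hphase : π * I * j * ((n : ℂ) ^ 2 - n) = (j * m : ℤ) * (2 * π * I) := by
    push_cast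
    linear_combination π * I * j * hmC
  rw [Complex.exp_add, hphase, exp_int_mul_two_pi_mul_I, mul_one]

theorem cexp_mul_cexp_mul_eq_of_exponent_eq {A B e A' B' : ℂ} (j n : ℤ) (F : ℂ)
    (h : A + B + π * I * j * ((n : ℂ) ^ 2 - n) = e + (A' + B')) :
    cexp A * (cexp B * F) = cexp e * (cexp A' * (cexp B' * F)) := by
  rw [← mul_assoc, ← Complex.exp_add, ← cexp_add_pi_mul_I_mul_sq_sub_self _ j n, h,
    Complex.exp_add, Complex.exp_add]
  ring

theorem metaplectic_phaseShiftWindow_intCast (a b c d q p : ℝ) (j n : ℤ) (f : ℝ → ℂ) :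
    metaplectic a b c d (phaseShiftWindow q p f) n =
      cexp (π * I / 4 * j * (a * q - p * b)) *
        metaplectic a b (c + j * a) (d + j * b) (phaseShiftWindow (q - j * b) (p - j * a) f) n := by
  by_cases hb : b = 0
  · subst hb
    apply metaplectic_zero_eq_mul_of_eq
    by_cases ha : a = 0
    · simp [ha, phaseShiftWindow] -- junk values: `c / 0 = 0` and `n / 0 = 0`
    have haC : (a : ℂ) ≠ 0 := by exact_mod_cast ha
    simp only [phaseShiftWindow, mul_zero, sub_zero]
    apply cexp_mul_cexp_mul_eq_of_exponent_eq j n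
    push_cast
    field_simp
    ring
  · apply metaplectic_eq_mul_of_integrand_eq hb _ (j * b / 2)
    intro y
    have hbC : (b : ℂ) ≠ 0 := by exact_mod_cast hb
    simp only [phaseShiftWindow, show y + j * b / 2 + (q - j * b) / 2 = y + q / 2 by ring]
    apply cexp_mul_cexp_mul_eq_of_exponent_eq j n
    push_cast
    field_simp
    ring

theorem shiftMetaPair_eq_cexp_mul (a b c d q p : ℝ) (j : ℤ) (f : ℝ → ℂ) :
    shiftMetaPair a b c d q p f = cexp (π * I / 4 * j * (d * q - p * b)) *
      shiftMetaPair (a + j * b) b (c + j * d) d (q - j * b) (p - j * d) f := by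
  rw [shiftMetaPair_eq_tsum, shiftMetaPair_eq_tsum, ← tsum_mul_left]
  exact tsum_congr fun n ↦ metaplectic_phaseShiftWindow_intCast d b c a q p j n f

theorem exists_schwartzMap_tsum_intCast_eq_one : ∃ f : SchwartzMap ℝ ℂ, ∑' n : ℤ, f n = 1 := by
  let φ : ContDiffBump (0 : ℝ) := ⟨1 / 2, 1, by norm_num, by norm_num⟩
  have hφ : HasCompactSupport (fun x ↦ (φ x : ℂ)) := φ.hasCompactSupport.comp_left ofReal_zero
  let f := hφ.toSchwartzMap (ofRealCLM.contDiff.comp φ.contDiff)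
  have hf (x : ℝ) : f x = φ x := rfl
  refine ⟨f, ?_⟩
  rw [tsum_eq_single 0 fun n hn ↦ ?_] <;> rw [hf]
  · have h0 : φ 0 = 1 := φ.one_of_mem_closedBall (Metric.mem_closedBall_self (by norm_num))
    rw [Int.cast_zero, h0, ofReal_one]
  · rw [ofReal_eq_zero]
    apply φ.zero_of_le_dist
    have hn1 : (1 : ℝ) ≤ |(n : ℝ)| := by exact_mod_cast Int.one_le_abs hn
    simpa [φ] using hn1

theorem stmt7_general (a b c d q p j : ℤ) (μ₁ μ₂ : ℂ)
    (h1 : ∀ f : SchwartzMap ℝ ℂ,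
      shiftMetaPair (a : ℝ) (b : ℝ) (c : ℝ) (d : ℝ) (q : ℝ) (p : ℝ) (⇑f)
        = μ₁ * ∑' n : ℤ, f (n : ℝ))
    (h2 : ∀ f : SchwartzMap ℝ ℂ,
      shiftMetaPair ((a : ℝ) + j * b) (b : ℝ) ((c : ℝ) + j * d) (d : ℝ)
          ((q : ℝ) - j * b) ((p : ℝ) - j * d) (⇑f)
        = μ₂ * ∑' n : ℤ, f (n : ℝ)) :
    μ₁ = Complex.exp ((Real.pi : ℂ) * Complex.I / 4 * (j : ℂ)
      * ((d : ℂ) * (q : ℂ) - (p : ℂ) * (b : ℂ))) * μ₂ := by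
  obtain ⟨f, hf⟩ := exists_schwartzMap_tsum_intCast_eq_one
  have h := shiftMetaPair_eq_cexp_mul a b c d q p j f
  rw [h1, h2, hf, mul_one, mul_one] at h
  push_cast at h
  exact h

/-- Transformation of the eigenvalue `μ` under right multiplication by
`W_j = (1 0; j 1)`: `μ(M; (q,p)) = e^{(πi/4) j (dq - pb)} μ(M W_j; (q-jb, p-jd))`. -/
theorem stmt7 (a b c d q p j : ℤ) (hdet : a * d - b * c = 1)
    (hq : q ≡ a * b [ZMOD 2]) (hp : p ≡ c * d [ZMOD 2]) (μ₁ μ₂ : ℂ)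
    (h1 : ∀ f : SchwartzMap ℝ ℂ,
      shiftMetaPair (a : ℝ) (b : ℝ) (c : ℝ) (d : ℝ) (q : ℝ) (p : ℝ) (⇑f)
        = μ₁ * ∑' n : ℤ, f (n : ℝ))
    (h2 : ∀ f : SchwartzMap ℝ ℂ,
      shiftMetaPair ((a : ℝ) + j * b) (b : ℝ) ((c : ℝ) + j * d) (d : ℝ)
          ((q : ℝ) - j * b) ((p : ℝ) - j * d) (⇑f)
        = μ₂ * ∑' n : ℤ, f (n : ℝ)) :
    μ₁ = Complex.exp ((Real.pi : ℂ) * Complex.I / 4 * (j : ℂ)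
      * ((d : ℂ) * (q : ℂ) - (p : ℂ) * (b : ℂ))) * μ₂ :=
  stmt7_general a b c d q p j μ₁ μ₂ h1 h2
end

section
/- Let M = (a b; c d) be a real 2×2 matrix with ad − bc = 1 and b ≠ 0, and let τ ∈ ℂ with Im τ > 0. Set τ' = (c + dτ)/(a + bτ). Then for every x ∈ ℝ: (ib)^(−1/2)·∫_ℝ exp((πi/b)·(d·x² − 2xy + a·y²))·exp(πi·τ·y²) dy = (a + bτ)^(−1/2)·exp(πi·τ'·x²), where both complex square roots are taken with positive real part (note that a + bτ is not real, since b ≠ 0 and Im τ > 0, so the convention is unambiguous). -/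
/-!
Write the integrand as `exp (B y² + C y + D)` with `B = πi (a + bτ) / b`, whose real part is
`-π Im τ < 0`, and evaluate it by completing the square. The exponent `D - C² / 4B` simplifies to
`πi τ' x²` thanks to `ad - bc = 1`, and the prefactor is `(ib)^{-1/2} (ib / (a + bτ))^{1/2}`.
Both this product and `(a + bτ)^{-1/2}` square to `(a + bτ)⁻¹` and have positive real part, so
they coincide.
-/

open MeasureTheory

namespace Complex

lemma exp_re_pos_of_abs_im_lt {w : ℂ} (h : |w.im| < Real.pi / 2) : 0 < (exp w).re := by
  rw [exp_re]
  have : 0 < Real.cos w.im := Real.cos_pos_of_mem_Ioo (abs_lt.mp h)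
  positivity

lemma eq_of_sq_eq_of_re_pos {u v : ℂ} (h : u ^ 2 = v ^ 2) (hu : 0 < u.re) (hv : 0 < v.re) :
    u = v := by
  rcases sq_eq_sq_iff_eq_or_eq_neg.mp h with h | h
  · exact h
  · rw [h, neg_re] at hu
    linarith

lemma sq_cpow_half_mul (x s : ℂ) : (x ^ (s / 2)) ^ 2 = x ^ s := by
  rw [← cpow_nat_mul]
  congr 1
  push_cast
  ring

lemma cpow_neg_half_mul_cpow_half_div {z w : ℂ} (hz : 0 ≤ z.re) (hzw : 0 < (z / w).re) :
    z ^ (-(1/2) : ℂ) * (z / w) ^ (1/2 : ℂ) = w ^ (-(1/2) : ℂ) := by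
  have hz0 : z ≠ 0 := by rintro rfl; simp at hzw
  have hw0 : w ≠ 0 := by rintro rfl; simp at hzw
  have hzw0 : z / w ≠ 0 := div_ne_zero hz0 hw0
  have harg_z : |z.arg| ≤ Real.pi / 2 := abs_arg_le_pi_div_two_iff.mpr hz
  have harg_zw : |(z / w).arg| < Real.pi / 2 := abs_arg_lt_pi_div_two_iff.mpr (Or.inl hzw)
  -- a negative real `w` would give `(z / w).re = z.re / w.re ≤ 0`
  have harg_w : |w.arg| < Real.pi := by
    refine abs_lt.mpr ⟨neg_pi_lt_arg w, (arg_le_pi w).lt_of_ne fun hπ => ?_⟩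
    obtain ⟨hre, him⟩ := arg_eq_pi_iff.mp hπ
    have hw : w = (w.re : ℂ) := ext rfl (by simp [him])
    rw [hw, div_ofReal_re] at hzw
    exact (div_nonpos_of_nonneg_of_nonpos hz hre.le).not_gt hzw
  apply eq_of_sq_eq_of_re_pos
  · rw [mul_pow, ← neg_div, sq_cpow_half_mul, sq_cpow_half_mul, sq_cpow_half_mul, cpow_neg_one,
      cpow_one, cpow_neg_one]
    field_simp
  · rw [cpow_def_of_ne_zero hz0, cpow_def_of_ne_zero hzw0, ← exp_add]
    apply exp_re_pos_of_abs_im_lt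
    have him : (log z * -(1/2) + log (z / w) * (1/2)).im = ((z / w).arg - z.arg) / 2 := by
      simp [log_im]
      ring
    rw [him, abs_div, abs_two]
    linarith [abs_sub (z / w).arg z.arg]
  · rw [cpow_def_of_ne_zero hw0]
    apply exp_re_pos_of_abs_im_lt
    have him : (log w * -(1/2)).im = -w.arg / 2 := by
      simp [log_im]
      ring
    rw [him, abs_div, abs_neg, abs_two]
    linarith

section Gaussian

variable {b : ℝ} {w : ℂ}

lemma re_pi_mul_I_mul_div_ofReal_neg (h : 0 < b * w.im) : (Real.pi * I * w / b).re < 0 := by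
  have hb : b ≠ 0 := by rintro rfl; simp at h
  have hre : (Real.pi * I * w / b).re = -(Real.pi * (b * w.im)) / b ^ 2 := by
    simp [div_ofReal_re]
    field_simp
  rw [hre]
  have := mul_pos Real.pi_pos h
  exact div_neg_of_neg_of_pos (neg_neg_of_pos this) (by positivity)

lemma re_I_mul_ofReal_div_pos (h : 0 < b * w.im) : 0 < (I * b / w).re := by
  have hw : w ≠ 0 := by rintro rfl; simp at h
  have hre : (I * b / w).re = b * w.im / normSq w := by simp [div_re]
  rw [hre]
  exact div_pos h (normSq_pos.mpr hw)

lemma pi_div_neg_pi_mul_I_mul_div (hw : w ≠ 0) :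
    (Real.pi : ℂ) / -(Real.pi * I * w / b) = I * b / w := by
  field_simp
  rw [I_sq]
  ring

end Gaussian

lemma completeSquare_exponent_eq_of_det_eq_one {a b c d τ x : ℂ} (hdet : a * d - b * c = 1)
    (hb : b ≠ 0) (hw : a + b * τ ≠ 0) :
    Real.pi * I / b * (d * x ^ 2) - (-2 * Real.pi * I * x / b) ^ 2 /
        (4 * (Real.pi * I * (a + b * τ) / b))
      = Real.pi * I * ((c + d * τ) / (a + b * τ)) * x ^ 2 := by
  have hπ : (Real.pi : ℂ) ≠ 0 := ofReal_ne_zero.mpr Real.pi_ne_zero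
  field_simp
  linear_combination 4 * x ^ 2 * hdet

end Complex

/-- Action of a metaplectic operator on a centered Gaussian:
`𝓜(M) e^{πiτy²} = (a + bτ)^{-1/2} e^{πiτ'x²}` with `τ' = (c + dτ)/(a + bτ)`. -/
theorem stmt10 (a b c d : ℝ) (hdet : a * d - b * c = 1) (hb : b ≠ 0)
    (τ : ℂ) (hτ : 0 < τ.im) :
    ∀ x : ℝ,
      (Complex.I * (b : ℂ)) ^ (-(1/2) : ℂ) *
        ∫ y : ℝ, Complex.exp ((Real.pi : ℂ) * Complex.I / (b : ℂ) *
            ((d : ℂ) * (x : ℂ) ^ 2 - 2 * (x : ℂ) * (y : ℂ) + (a : ℂ) * (y : ℂ) ^ 2)) *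
          Complex.exp ((Real.pi : ℂ) * Complex.I * τ * (y : ℂ) ^ 2)
      = ((a : ℂ) + (b : ℂ) * τ) ^ (-(1/2) : ℂ) *
          Complex.exp ((Real.pi : ℂ) * Complex.I *
            (((c : ℂ) + (d : ℂ) * τ) / ((a : ℂ) + (b : ℂ) * τ)) * (x : ℂ) ^ 2) := by
  intro x
  have hb' : (b : ℂ) ≠ 0 := Complex.ofReal_ne_zero.mpr hb
  have hdet' : (a : ℂ) * d - b * c = 1 := by exact_mod_cast hdet
  have hbw : 0 < b * ((a : ℂ) + b * τ).im := by
    have : 0 < b ^ 2 * τ.im := by positivity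
    simpa [sq, mul_assoc] using this
  have hw : (a : ℂ) + b * τ ≠ 0 := by rintro h; simp [h] at hbw
  calc _ = (Complex.I * b) ^ (-(1/2) : ℂ) * ∫ y : ℝ,
        Complex.exp (Real.pi * Complex.I * (a + b * τ) / b * y ^ 2
          + (-2 * Real.pi * Complex.I * x / b) * y + Real.pi * Complex.I / b * (d * x ^ 2)) := by
        congr 1
        refine integral_congr_ae (Filter.Eventually.of_forall fun y => ?_)
        simp only [← Complex.exp_add]
        congr 1
        field_simp
        ring
    _ = _ := by
      rw [integral_cexp_quadratic (Complex.re_pi_mul_I_mul_div_ofReal_neg hbw),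
        Complex.pi_div_neg_pi_mul_I_mul_div hw,
        Complex.completeSquare_exponent_eq_of_det_eq_one hdet' hb' hw,
        ← mul_assoc, Complex.cpow_neg_half_mul_cpow_half_div (by simp)
          (Complex.re_I_mul_ofReal_div_pos hbw)]
end

section
/- For Δ > 0, r > 0, τ ∈ ℂ with Im τ > 0, and m₀ ∈ ℝ, let G(Δ, r, τ, m₀) = √r·∑_{m∈ℤ} exp(−πi·Δ²·(m + m₀)² + πi·τ·r²·(m + m₀)²) (the series converges absolutely since Im τ > 0). Then for every ε > 0 there exist δ > 0 and T > 0 such that whenever 0 < Δ < δ, |r/Δ² − 1| < δ, Im τ > T and |τ|·Δ² < δ, one has |G(Δ, r, τ, m₀) − exp(−πi/4)| < ε for every m₀ ∈ ℝ. (That is, in the regime r = Δ²(1 + o(1)), Im τ → ∞, |τ| = o(Δ^(−2)), the pairing of the Gaussian exp(πi·τ·x²) against the discretized Fresnel measure √r·∑_m exp(πi(Δ(m+m₀))²)·δ(x − r(m+m₀)) converges to e^{−πi/4}, uniformly in m₀.) -/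
/-!
With `z = τ r² - Δ²`, the series is `√r · e^{πi z m₀²} θ(z m₀, z)` for the Jacobi theta function
`θ(w, τ) = ∑ₙ e^{2πi n w + πi n² τ}`, and the functional equation `τ ↦ -1/τ` turns it into
`u^{-1/2} θ(m₀, -1/z)` with `u = -i z / r`. In the given regime `u = i (Δ²/r) - i τ r → i`, so the
prefactor tends to `i^{-1/2} = e^{-πi/4}`, while `Im(-1/z) = Im τ / |u|² → ∞`; for real `m₀` the
tail of the theta series is bounded by `2q/(1-q)` with `q = e^{-π Im(-1/z)}`, so
`θ(m₀, -1/z) → 1` uniformly in `m₀`.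
-/

/-- The pairing of the Gaussian `exp(πiτx²)` against the discretized Fresnel measure:
`G(Δ, r, τ, m₀) = √r ∑_{m∈ℤ} exp(-πiΔ²(m + m₀)² + πiτr²(m + m₀)²)`. -/
noncomputable def gaussFresnelPair (Δ r : ℝ) (τ : ℂ) (m₀ : ℝ) : ℂ :=
  (Real.sqrt r : ℂ) * ∑' m : ℤ,
    Complex.exp (-(Real.pi : ℂ) * Complex.I * ((Δ ^ 2 : ℝ) : ℂ) * ((m : ℂ) + (m₀ : ℂ)) ^ 2
      + (Real.pi : ℂ) * Complex.I * τ * ((r ^ 2 : ℝ) : ℂ) * ((m : ℂ) + (m₀ : ℂ)) ^ 2)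

open Complex Real Filter Topology

lemma ofReal_mul_cpow {r : ℝ} (hr : 0 < r) (w s : ℂ) :
    ((r : ℂ) * w) ^ s = (r : ℂ) ^ s * w ^ s := by
  rcases eq_or_ne w 0 with rfl | hw
  · rcases eq_or_ne s 0 with rfl | hs
    · simp
    · simp [zero_cpow hs]
  rw [cpow_def_of_ne_zero (mul_ne_zero (ofReal_ne_zero.2 hr.ne') hw),
    cpow_def_of_ne_zero (ofReal_ne_zero.2 hr.ne'), cpow_def_of_ne_zero hw, ← Complex.exp_add,
    log_ofReal_mul hr hw, ofReal_log hr.le, add_mul]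

lemma sqrt_mul_cpow_neg_half {r : ℝ} (hr : 0 < r) (w : ℂ) :
    (√r : ℂ) * w ^ (-(1 / 2) : ℂ) = (w / r) ^ (-(1 / 2) : ℂ) := by
  have hsqrt : (√r : ℂ) = (r : ℂ) ^ (1 / 2 : ℂ) := by
    rw [sqrt_eq_rpow, ofReal_cpow hr.le]
    norm_num
  have hsqrt_ne : (r : ℂ) ^ (1 / 2 : ℂ) ≠ 0 := by
    rw [← hsqrt]
    exact ofReal_ne_zero.2 (Real.sqrt_pos.2 hr).ne'
  calc (√r : ℂ) * w ^ (-(1 / 2) : ℂ)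
      = (r : ℂ) ^ (1 / 2 : ℂ) * ((r : ℂ) * (w / r)) ^ (-(1 / 2) : ℂ) := by
        rw [hsqrt, mul_div_cancel₀ w (ofReal_ne_zero.2 hr.ne')]
    _ = (w / r) ^ (-(1 / 2) : ℂ) := by
        rw [ofReal_mul_cpow hr, cpow_neg (r : ℂ), ← mul_assoc, mul_inv_cancel₀ hsqrt_ne, one_mul]

lemma cexp_mul_jacobiTheta₂_mul_self {z : ℂ} (hz : z ≠ 0) (m : ℂ) :
    cexp (π * I * z * m ^ 2) * jacobiTheta₂ (z * m) z =
      (-I * z) ^ (-(1 / 2) : ℂ) * jacobiTheta₂ m (-1 / z) := by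
  have hcancel : π * I * z * m ^ 2 + -π * I * (z * m) ^ 2 / z = 0 := by
    field_simp
    ring
  rw [jacobiTheta₂_functional_equation, mul_div_cancel_left₀ _ hz, cpow_neg, ← one_div]
  calc _ = cexp (π * I * z * m ^ 2 + -π * I * (z * m) ^ 2 / z) *
        (1 / (-I * z) ^ (1 / 2 : ℂ) * jacobiTheta₂ m (-1 / z)) := by
        rw [Complex.exp_add]
        ring
    _ = _ := by rw [hcancel, Complex.exp_zero, one_mul]

lemma gaussFresnelPair_eq_sqrt_mul_jacobiTheta₂ (Δ r : ℝ) (τ : ℂ) (m₀ : ℝ) :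
    gaussFresnelPair Δ r τ m₀ = ((√r : ℝ) : ℂ) * (cexp (π * I * (τ * r ^ 2 - Δ ^ 2) * m₀ ^ 2) *
      jacobiTheta₂ ((τ * r ^ 2 - Δ ^ 2) * m₀) (τ * r ^ 2 - Δ ^ 2)) := by
  rw [gaussFresnelPair]
  congr 1
  rw [jacobiTheta₂, ← tsum_mul_left]
  refine tsum_congr fun n => ?_
  rw [jacobiTheta₂_term, ← Complex.exp_add]
  push_cast
  ring_nf

lemma im_mul_sq_sub_sq (Δ r : ℝ) (τ : ℂ) : (τ * r ^ 2 - Δ ^ 2).im = τ.im * r ^ 2 := by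
  simp [← ofReal_pow]

lemma gaussFresnelPair_eq_cpow_mul_jacobiTheta₂ (Δ : ℝ) {r : ℝ} (hr : 0 < r) {τ : ℂ}
    (hτ : 0 < τ.im) (m₀ : ℝ) :
    gaussFresnelPair Δ r τ m₀ = (-I * (τ * r ^ 2 - Δ ^ 2) / r) ^ (-(1 / 2) : ℂ) *
      jacobiTheta₂ m₀ (-1 / (τ * r ^ 2 - Δ ^ 2)) := by
  have hz : τ * r ^ 2 - Δ ^ 2 ≠ 0 := fun h => by
    have him := im_mul_sq_sub_sq Δ r τ
    rw [h, zero_im] at him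
    nlinarith [mul_pos hτ (pow_pos hr 2)]
  rw [gaussFresnelPair_eq_sqrt_mul_jacobiTheta₂, cexp_mul_jacobiTheta₂_mul_self hz, ← mul_assoc,
    sqrt_mul_cpow_neg_half hr]

lemma hasSum_pow_natAbs {q : ℝ} (h0 : 0 ≤ q) (h1 : q < 1) :
    HasSum (fun n : ℤ => q ^ n.natAbs) ((1 + q) / (1 - q)) := by
  have hgeom := hasSum_geometric_of_lt_one h0 h1
  rw [show (1 + q) / (1 - q) = (1 - q)⁻¹ + q * (1 - q)⁻¹ by ring]
  refine HasSum.of_nat_of_neg_add_one (by simpa using hgeom) ?_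
  have hnatAbs (n : ℕ) : (-((n : ℤ) + 1)).natAbs = n + 1 := by omega
  simpa only [hnatAbs, pow_succ'] using hgeom.mul_left q

lemma norm_jacobiTheta₂_term_ofReal_le (n : ℤ) (x : ℝ) {τ : ℂ} (hτ : 0 < τ.im) :
    ‖jacobiTheta₂_term n x τ‖ ≤ rexp (-π * τ.im) ^ n.natAbs :=
  calc ‖jacobiTheta₂_term n x τ‖ = ‖jacobiTheta₂_term n 0 τ‖ := by
        simp only [norm_jacobiTheta₂_term, ofReal_im, zero_im]
    _ = ‖cexp (π * I * n ^ 2 * τ)‖ := by simp [jacobiTheta₂_term]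
    _ ≤ _ := norm_exp_mul_sq_le hτ n

lemma norm_jacobiTheta₂_ofReal_sub_one_le (x : ℝ) {τ : ℂ} (hτ : 0 < τ.im) :
    ‖jacobiTheta₂ x τ - 1‖ ≤ 2 / (1 - rexp (-π * τ.im)) * rexp (-π * τ.im) := by
  have hq1 : rexp (-π * τ.im) < 1 :=
    exp_lt_one_iff.mpr (mul_neg_of_neg_of_pos (neg_lt_zero.mpr pi_pos) hτ)
  have hθ := (hasSum_jacobiTheta₂_term (x : ℂ) hτ).sub (hasSum_ite_eq 0 1)
  have hmaj := (hasSum_pow_natAbs (exp_pos _).le hq1).sub (hasSum_ite_eq (0 : ℤ) (1 : ℝ))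
  refine (hθ.norm_le_of_bounded hmaj fun n => ?_).trans_eq ?_
  · rcases eq_or_ne n 0 with rfl | hn
    · simp [jacobiTheta₂_term]
    · simpa [hn] using norm_jacobiTheta₂_term_ofReal_le n x hτ
  · rw [div_sub_one (sub_pos.2 hq1).ne', div_mul_eq_mul_div]
    ring

lemma tendstoUniformly_jacobiTheta₂_ofReal :
    TendstoUniformly (fun τ (x : ℝ) => jacobiTheta₂ x τ) 1 (comap im atTop) := by
  have hq : Tendsto (fun τ : ℂ => rexp (-π * τ.im)) (comap im atTop) (𝓝 0) :=
    (tendsto_exp_atBot.comp (tendsto_id.const_mul_atTop_of_neg (neg_lt_zero.2 pi_pos))).comp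
      tendsto_comap
  have hbound : Tendsto (fun τ : ℂ => 2 / (1 - rexp (-π * τ.im)) * rexp (-π * τ.im))
      (comap im atTop) (𝓝 0) := by
    simpa using (tendsto_const_nhds.div (tendsto_const_nhds.sub hq) (by norm_num)).mul hq
  rw [Metric.tendstoUniformly_iff]
  intro ε hε
  filter_upwards [hbound.eventually (gt_mem_nhds hε),
    tendsto_comap.eventually (eventually_gt_atTop 0)] with τ hτε hτ x
  rw [Pi.one_apply, dist_comm, dist_eq_norm]
  exact (norm_jacobiTheta₂_ofReal_sub_one_le x hτ).trans_lt hτε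

lemma I_cpow_neg_half : I ^ (-(1 / 2) : ℂ) = cexp (-π * I / 4) := by
  rw [cpow_def_of_ne_zero I_ne_zero, log_I]
  ring_nf

lemma tendsto_cpow_neg_half_mul :
    Tendsto (fun p : ℂ × ℂ => p.1 ^ (-(1 / 2) : ℂ) * p.2) (𝓝 (I, 1)) (𝓝 (cexp (-π * I / 4))) := by
  have hI : I ∈ slitPlane := mem_slitPlane_iff.2 (Or.inr (by simp))
  have hcont : ContinuousAt (fun p : ℂ × ℂ => p.1 ^ (-(1 / 2) : ℂ) * p.2) (I, 1) :=
    (continuousAt_fst.cpow continuousAt_const hI).mul continuousAt_snd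
  rw [← I_cpow_neg_half, ← mul_one (I ^ _)]
  exact hcont.tendsto

lemma norm_neg_I_mul_div_sub_I_lt {Δ r δ : ℝ} {τ : ℂ} (hΔ : Δ ≠ 0) (hr : 0 < r)
    (hδ : δ ≤ 1 / 2) (hρ : |r / Δ ^ 2 - 1| < δ) (hτ : ‖τ‖ * Δ ^ 2 < δ) :
    ‖-I * (τ * r ^ 2 - Δ ^ 2) / r - I‖ < 4 * δ := by
  have hu : -I * (τ * r ^ 2 - Δ ^ 2) / r - I =
      I * ((r / Δ ^ 2)⁻¹ - 1 : ℝ) - I * (τ * Δ ^ 2) * (r / Δ ^ 2 : ℝ) := by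
    have hΔ' : (Δ : ℂ) ≠ 0 := ofReal_ne_zero.2 hΔ
    have hr' : (r : ℂ) ≠ 0 := ofReal_ne_zero.2 hr.ne'
    push_cast
    field_simp
    ring
  have hδ_pos : 0 < δ := lt_of_le_of_lt (by positivity) hτ
  set ρ := r / Δ ^ 2
  obtain ⟨hρ_lower, hρ_upper⟩ := abs_lt.1 hρ
  have hρ_pos : 0 < ρ := by linarith
  have hinv : |ρ⁻¹ - 1| < 2 * δ := by
    rw [show ρ⁻¹ - 1 = (1 - ρ) / ρ by field_simp, abs_div, abs_of_pos hρ_pos, abs_sub_comm,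
      div_lt_iff₀ hρ_pos]
    nlinarith
  have hτρ : ‖τ‖ * Δ ^ 2 * ρ < 2 * δ := by nlinarith [norm_nonneg τ]
  rw [hu]
  calc ‖I * (ρ⁻¹ - 1 : ℝ) - I * (τ * Δ ^ 2) * (ρ : ℝ)‖
      ≤ ‖I * (ρ⁻¹ - 1 : ℝ)‖ + ‖I * (τ * Δ ^ 2) * (ρ : ℝ)‖ := norm_sub_le _ _
    _ = |ρ⁻¹ - 1| + ‖τ‖ * Δ ^ 2 * ρ := by
        simp only [norm_mul, norm_I, one_mul, norm_pow, norm_real, Real.norm_eq_abs, sq_abs,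
          abs_of_pos hρ_pos]
    _ < 4 * δ := by linarith

lemma im_neg_one_div_sub (Δ : ℝ) {r : ℝ} (hr : 0 < r) (τ : ℂ) :
    (-1 / (τ * r ^ 2 - Δ ^ 2)).im = τ.im / ‖-I * (τ * r ^ 2 - Δ ^ 2) / r‖ ^ 2 := by
  have hnorm : ‖-I * (τ * r ^ 2 - Δ ^ 2) / r‖ = ‖τ * r ^ 2 - Δ ^ 2‖ / r := by
    simp [abs_of_pos hr]
  rw [neg_div, neg_im, one_div, inv_im, neg_div, neg_neg, normSq_eq_norm_sq, im_mul_sq_sub_sq,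
    hnorm, div_pow, div_div_eq_mul_div]

lemma lt_im_neg_one_div_sub {Δ r T : ℝ} {τ : ℂ} (hr : 0 < r) (hT : 0 < T)
    (hu : ‖-I * (τ * r ^ 2 - Δ ^ 2) / r - I‖ < 1) (hτ : 4 * T < τ.im) :
    T < (-1 / (τ * r ^ 2 - Δ ^ 2)).im := by
  set u := -I * (τ * r ^ 2 - Δ ^ 2) / r with hu_def
  have hu_pos : 0 < ‖u‖ := by linarith [norm_sub_rev I u, norm_I ▸ norm_sub_norm_le I u]
  have hu_sq : ‖u‖ ^ 2 < 4 := by nlinarith [norm_I ▸ norm_sub_norm_le u I]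
  rw [im_neg_one_div_sub Δ hr, ← hu_def, lt_div_iff₀ (by positivity)]
  nlinarith [mul_lt_mul_of_pos_left hu_sq hT]

/-- In the regime `r = Δ²(1 + o(1))`, `Im τ → ∞`, `|τ| = o(Δ^{-2})`, the pairing
`G(Δ, r, τ, m₀)` converges to `e^{-πi/4}`, uniformly in `m₀`. -/
theorem stmt18 :
    ∀ ε > (0 : ℝ), ∃ δ > (0 : ℝ), ∃ T > (0 : ℝ), ∀ (Δ r m₀ : ℝ) (τ : ℂ),
      0 < Δ → Δ < δ → 0 < r → |r / Δ ^ 2 - 1| < δ →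
      T < τ.im → ‖τ‖ * Δ ^ 2 < δ →
      ‖gaussFresnelPair Δ r τ m₀
        - Complex.exp (-(Real.pi : ℂ) * Complex.I / 4)‖ < ε := by
  intro ε hε
  obtain ⟨η, hη, hlim⟩ := Metric.tendsto_nhds_nhds.1 tendsto_cpow_neg_half_mul ε hε
  obtain ⟨T₀, hT₀, hθ⟩ := ((atTop_basis_Ioi' 0).comap im).eventually_iff.1
    (Metric.tendstoUniformly_iff.1 tendstoUniformly_jacobiTheta₂_ofReal η hη)
  refine ⟨min (η / 4) (1 / 4), by positivity, 4 * T₀, by positivity,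
    fun Δ r m₀ τ hΔ _ hr hρ hT hτ => ?_⟩
  have hδ_le : min (η / 4) (1 / 4) ≤ 1 / 4 := min_le_right _ _
  have hu := norm_neg_I_mul_div_sub_I_lt hΔ.ne' hr (by linarith) hρ hτ
  have hw := lt_im_neg_one_div_sub hr hT₀ (hu.trans_le (by linarith)) hT
  have hdist : dist (-I * (τ * r ^ 2 - Δ ^ 2) / r, jacobiTheta₂ m₀ (-1 / (τ * r ^ 2 - Δ ^ 2)))
      (I, 1) < η := by
    rw [Prod.dist_eq, max_lt_iff, dist_eq_norm]
    exact ⟨hu.trans_le (by linarith [min_le_left (η / 4) (1 / 4)]),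
      (dist_comm _ _).trans_lt (hθ hw m₀)⟩
  rw [gaussFresnelPair_eq_cpow_mul_jacobiTheta₂ Δ hr (by linarith) m₀]
  simpa only [dist_eq_norm] using hlim hdist
end
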